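/- Let A be an abelian category. Suppose given morphisms u : X ⟶ Y, x : X ⟶ X', u' : X' ⟶ Y', y : Y ⟶ Y', v' : Y' ⟶ Z', y' : Y' ⟶ Y'', z' : Z' ⟶ Z'', v'' : Y'' ⟶ Z'' with u ≫ y = x ≫ u' and v' ≫ z' = y' ≫ v''. Assume: (a) the quadrangle (u, x, y, u') is a weak square; (b) y ≫ v' = 0 and the pair (y, v') is exact at Y'; (c) u' ≫ y' = 0 and the pair (u', y') is exact at Y'; (d) the quadrangle (v', y', z', v'') is a weak square. Then the sequence X ⟶ Y' ⟶ Y'' ⊞ Z' ⟶ Z'', with morphisms x ≫ u', biprod.lift y' v', and biprod.desc v'' (-z'), is exact at Y' and exact at Y'' ⊞ Z'. -/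

import Mathlib

open CategoryTheory CategoryTheory.Limits

/-
A chase with refinements. A weak square behaves like a pullback up to refinements: a pair
`b, c` with `b ≫ h = c ≫ k` factors through `(f, g)` after precomposition with an epimorphism.
At `Y'`, an element killed by `y'` and `v'` comes from `Y` (exactness of `(y, v')`) and, after
refining, from `X'` (exactness of `(u', y')`); these two preimages agree in `Y'`, so the weak
square `(u, x, y, u')` lifts them to `X`. Exactness at `Y'' ⊞ Z'` is the weak square
`(v', y', z', v'')` with the two summands swapped.
-/

/-- A commutative quadrangle `(f, g, h, k)` (with `f ≫ h = g ≫ k`) in an abelian category is a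
*weak square* if its diagonal sequence `A ⟶ B ⊞ C ⟶ D`, with first morphism `biprod.lift f g`
and second morphism `biprod.desc h (-k)`, is exact at `B ⊞ C`. -/
def IsWeakSquare {A : Type*} [Category A] [Abelian A] {W X Y Z : A}
    (f : W ⟶ X) (g : W ⟶ Y) (h : X ⟶ Z) (k : Y ⟶ Z) : Prop :=
  ∃ w : biprod.lift f g ≫ biprod.desc h (-k) = 0,
    (ShortComplex.mk (biprod.lift f g) (biprod.desc h (-k)) w).Exact

namespace IsWeakSquare

variable {A : Type*} [Category A] [Abelian A] {W X Y Z : A}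
  {f : W ⟶ X} {g : W ⟶ Y} {h : X ⟶ Z} {k : Y ⟶ Z}

lemma exists_lift_up_to_refinements (hw : IsWeakSquare f g h k) {T : A} (b : T ⟶ X)
    (c : T ⟶ Y) (hbc : b ≫ h = c ≫ k) :
    ∃ (T' : A) (π : T' ⟶ T) (_ : Epi π) (s : T' ⟶ W), π ≫ b = s ≫ f ∧ π ≫ c = s ≫ g := by
  obtain ⟨_, hex⟩ := hw
  obtain ⟨T', π, hπ, s, hs⟩ := hex.exact_up_to_refinements (biprod.lift b c) (by simp [hbc])
  exact ⟨T', π, hπ, s, by simpa using hs =≫ biprod.fst, by simpa using hs =≫ biprod.snd⟩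

lemma comp_eq (hw : IsWeakSquare f g h k) : f ≫ h = g ≫ k := by
  simpa [add_neg_eq_zero] using hw.1

lemma symm (hw : IsWeakSquare f g h k) : IsWeakSquare g f k h := by
  refine ⟨by simp [hw.comp_eq], ?_⟩
  rw [ShortComplex.exact_iff_exact_up_to_refinements]
  intro T t ht
  have hcomm : (t ≫ biprod.snd) ≫ h = (t ≫ biprod.fst) ≫ k := by
    simpa [biprod.desc_eq, add_neg_eq_zero, eq_comm] using ht
  obtain ⟨T', π, hπ, s, hf, hg⟩ := hw.exists_lift_up_to_refinements _ _ hcomm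
  refine ⟨T', π, hπ, s, biprod.hom_ext _ _ ?_ ?_⟩
  · simpa using hg
  · simpa using hf

lemma exact_comp_lift (hw : IsWeakSquare f g h k) {Z₁ Z₂ : A} {p : Z ⟶ Z₁} {q : Z ⟶ Z₂}
    {hp : h ≫ p = 0} (hhp : (ShortComplex.mk h p hp).Exact)
    {hq : k ≫ q = 0} (hkq : (ShortComplex.mk k q hq).Exact)
    (w : (g ≫ k) ≫ biprod.lift q p = 0) :
    (ShortComplex.mk (g ≫ k) (biprod.lift q p) w).Exact := by
  rw [ShortComplex.exact_iff_exact_up_to_refinements]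
  intro T t ht
  have htq : t ≫ q = 0 := by simpa using ht =≫ biprod.fst
  have htp : t ≫ p = 0 := by simpa using ht =≫ biprod.snd
  obtain ⟨T₁, π₁, _, c, hc⟩ := hhp.exact_up_to_refinements t htp
  obtain ⟨T₂, π₂, _, b, hb⟩ := hkq.exact_up_to_refinements (π₁ ≫ t) (by simp [htq])
  obtain ⟨T₃, π₃, _, s, -, hs⟩ :=
    hw.exists_lift_up_to_refinements (π₂ ≫ c) b (by dsimp at hc hb; rw [Category.assoc, ← hc, hb])
  refine ⟨T₃, π₃ ≫ π₂ ≫ π₁, inferInstance, s, ?_⟩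
  dsimp at hb ⊢
  rw [Category.assoc, Category.assoc, hb, reassoc_of% hs]

end IsWeakSquare

/-- Given weak squares `(u, x, y, u')` and `(v', y', z', v'')` together with exactness of
`(y, v')` and `(u', y')` at `Y'`, the sequence
`X ⟶ Y' ⟶ Y'' ⊞ Z' ⟶ Z''` with morphisms `x ≫ u'`, `biprod.lift y' v'` and
`biprod.desc v'' (-z')` is exact at `Y'` and at `Y'' ⊞ Z'`. -/
theorem exact_of_weakSquares {A : Type*} [Category A] [Abelian A]
    {X Y X' Y' Z' Y'' Z'' : A}
    (u : X ⟶ Y) (x : X ⟶ X') (u' : X' ⟶ Y') (y : Y ⟶ Y') (v' : Y' ⟶ Z')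
    (y' : Y' ⟶ Y'') (z' : Z' ⟶ Z'') (v'' : Y'' ⟶ Z'')
    (comm₁ : u ≫ y = x ≫ u') (comm₂ : v' ≫ z' = y' ≫ v'')
    (ha : IsWeakSquare u x y u')
    (hb0 : y ≫ v' = 0) (hb : (ShortComplex.mk y v' hb0).Exact)
    (hc0 : u' ≫ y' = 0) (hc : (ShortComplex.mk u' y' hc0).Exact)
    (hd : IsWeakSquare v' y' z' v'') :
    (ShortComplex.mk (x ≫ u') (biprod.lift y' v')
        (by
          apply biprod.hom_ext
          · simp only [Category.assoc, biprod.lift_fst, zero_comp]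
            rw [hc0, comp_zero]
          · simp only [Category.assoc, biprod.lift_snd, zero_comp]
            rw [← Category.assoc, ← comm₁, Category.assoc, hb0, comp_zero])).Exact ∧
    (ShortComplex.mk (biprod.lift y' v') (biprod.desc v'' (-z'))
        (by simp [biprod.lift_desc, comm₂])).Exact := by
  obtain ⟨_, hd'⟩ := hd.symm
  exact ⟨ha.exact_comp_lift hb hc _, hd'⟩
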